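/- Let r ∈ (0,1), s = sqrt(1 - r^2), and k ≥ 1 a natural number. If r ∈ [1/(k+2), 1/(k+1)), then the set of pairs of natural numbers (m,l) with (m,l) ≠ (0,0) and m^2 s^2 + l^2 r^2 - 1 < 0 is exactly {(0,l) : 2 ≤ l ≤ k+1}, hence has cardinality k. -/

import Mathlib

/-!
Away from the three modes with `m + l < 2`, where the first factor of the eigenvalue vanishes,
that factor and the denominator are positive, so `A_{m,l}` is unstable exactly when
`m² s² + l² r² < 1`. On the Clifford torus `r² + s² = 1` this rules out every mode with `m ≥ 1`
as soon as `r ≤ 1/2`, and for `m = 0` it reads `l r < 1`, i.e. `l ≤ k + 1` when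
`1/(k+2) ≤ r < 1/(k+1)`.
-/

/-- Eigenvalue of the stability operator `L_r` at the Clifford torus on the
Fourier mode `A_{m,l}`. -/
noncomputable def cliffordEigenvalue (r s : ℝ) (m l : ℕ) : ℝ :=
  (((m : ℝ) ^ 4 - (m : ℝ) ^ 2) * s ^ 4 + ((l : ℝ) ^ 4 - (l : ℝ) ^ 2) * r ^ 4
      + 2 * (m : ℝ) ^ 2 * (l : ℝ) ^ 2 * r ^ 2 * s ^ 2)
    * ((m : ℝ) ^ 2 * s ^ 2 + (l : ℝ) ^ 2 * r ^ 2 - 1)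
    / (r ^ 4 * s ^ 4 * ((m : ℝ) ^ 2 * s ^ 2 + (l : ℝ) ^ 2 * r ^ 2))

lemma natCast_sq_le_pow_four (n : ℕ) : (n : ℝ) ^ 2 ≤ (n : ℝ) ^ 4 := by
  rcases n with _ | n
  · simp
  · exact pow_le_pow_right₀ (by simp) (by norm_num)

lemma natCast_sq_lt_pow_four {n : ℕ} (hn : 2 ≤ n) : (n : ℝ) ^ 2 < (n : ℝ) ^ 4 :=
  pow_lt_pow_right₀ (by exact_mod_cast hn) (by norm_num)

namespace CliffordTorus

variable {r s : ℝ} {m l : ℕ}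

lemma eigenvalue_numerator_pos (hr : 0 < r) (hs : 0 < s) (hml : 2 ≤ m + l) :
    0 < ((m : ℝ) ^ 4 - (m : ℝ) ^ 2) * s ^ 4 + ((l : ℝ) ^ 4 - (l : ℝ) ^ 2) * r ^ 4
      + 2 * (m : ℝ) ^ 2 * (l : ℝ) ^ 2 * r ^ 2 * s ^ 2 := by
  have hm := mul_nonneg (sub_nonneg.2 (natCast_sq_le_pow_four m)) (pow_pos hs 4).le
  have hl := mul_nonneg (sub_nonneg.2 (natCast_sq_le_pow_four l)) (pow_pos hr 4).le
  have hmixed : 0 ≤ 2 * (m : ℝ) ^ 2 * (l : ℝ) ^ 2 * r ^ 2 * s ^ 2 := by positivity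
  obtain hm2 | hl2 | ⟨hm1, hl1⟩ : 2 ≤ m ∨ 2 ≤ l ∨ (m ≠ 0 ∧ l ≠ 0) := by omega
  · nlinarith [mul_pos (sub_pos.2 (natCast_sq_lt_pow_four hm2)) (pow_pos hs 4)]
  · nlinarith [mul_pos (sub_pos.2 (natCast_sq_lt_pow_four hl2)) (pow_pos hr 4)]
  · have : 0 < 2 * (m : ℝ) ^ 2 * (l : ℝ) ^ 2 * r ^ 2 * s ^ 2 := by positivity
    linarith

lemma eigenvalue_eq_zero_of_add_lt_two (hml : m + l < 2) : cliffordEigenvalue r s m l = 0 := by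
  obtain ⟨rfl, rfl⟩ | ⟨rfl, rfl⟩ | ⟨rfl, rfl⟩ :
      (m = 0 ∧ l = 0) ∨ (m = 1 ∧ l = 0) ∨ (m = 0 ∧ l = 1) := by omega
  all_goals simp [cliffordEigenvalue]

theorem eigenvalue_neg_iff (hr : 0 < r) (hs : 0 < s) :
    cliffordEigenvalue r s m l < 0 ↔ 2 ≤ m + l ∧ (m : ℝ) ^ 2 * s ^ 2 + (l : ℝ) ^ 2 * r ^ 2 < 1 := by
  by_cases hml : 2 ≤ m + l
  · have hA := eigenvalue_numerator_pos hr hs hml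
    have hD : 0 < (m : ℝ) ^ 2 * s ^ 2 + (l : ℝ) ^ 2 * r ^ 2 := by
      obtain hm | hl : m ≠ 0 ∨ l ≠ 0 := by omega
      · have : 0 < (m : ℝ) ^ 2 * s ^ 2 := by positivity
        nlinarith
      · have : 0 < (l : ℝ) ^ 2 * r ^ 2 := by positivity
        nlinarith
    rw [cliffordEigenvalue, div_lt_iff₀ (by positivity), zero_mul, mul_neg_iff]
    simp [hml, hA, hA.not_gt]
  · simp [hml, eigenvalue_eq_zero_of_add_lt_two (not_le.1 hml)]

theorem eigenvalue_neg_iff_of_sq_add_sq_eq_one (hr : 0 < r) (hr_half : r ≤ 1 / 2) (hs : 0 < s)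
    (hrs : r ^ 2 + s ^ 2 = 1) :
    cliffordEigenvalue r s m l < 0 ↔ m = 0 ∧ 2 ≤ l ∧ (l : ℝ) * r < 1 := by
  rw [eigenvalue_neg_iff hr hs]
  constructor
  · rintro ⟨hml, hD⟩
    obtain rfl : m = 0 := by
      by_contra hm
      have hm1 : (1 : ℝ) ≤ m := by exact_mod_cast Nat.one_le_iff_ne_zero.2 hm
      rcases Nat.eq_zero_or_pos l with rfl | hl
      · -- here `m ≥ 2`, so `m² s² ≥ 4 s² ≥ 3`
        have hm2 : (2 : ℝ) ≤ m := by exact_mod_cast hml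
        nlinarith [mul_le_mul_of_nonneg_right (pow_le_pow_left₀ zero_le_two hm2 2) (sq_nonneg s)]
      · have hl1 : (1 : ℝ) ≤ l := by exact_mod_cast hl
        nlinarith [mul_le_mul_of_nonneg_right (one_le_pow₀ hm1 : (1 : ℝ) ≤ (m : ℝ) ^ 2)
            (sq_nonneg s),
          mul_le_mul_of_nonneg_right (one_le_pow₀ hl1 : (1 : ℝ) ≤ (l : ℝ) ^ 2) (sq_nonneg r)]
    refine ⟨rfl, by omega, (sq_lt_one_iff₀ (by positivity)).1 ?_⟩
    simpa [mul_pow] using hD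
  · rintro ⟨rfl, hl, hlr⟩
    refine ⟨by omega, ?_⟩
    simpa [mul_pow] using (sq_lt_one_iff₀ (by positivity)).2 hlr

end CliffordTorus

lemma natCast_mul_lt_one_iff_of_mem_Ico {r : ℝ} {k l : ℕ}
    (hr : r ∈ Set.Ico (1 / ((k : ℝ) + 2)) (1 / ((k : ℝ) + 1))) :
    (l : ℝ) * r < 1 ↔ l ≤ k + 1 := by
  obtain ⟨hlo, hhi⟩ := hr
  rw [div_le_iff₀ (by positivity)] at hlo
  rw [lt_div_iff₀ (by positivity)] at hhi
  constructor
  · intro hlr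
    by_contra! hl
    have : (k : ℝ) + 2 ≤ l := by exact_mod_cast hl
    nlinarith
  · intro hl
    have : (l : ℝ) ≤ k + 1 := by exact_mod_cast hl
    nlinarith

lemma ncard_setOf_fst_eq_zero_snd_mem_Icc (a b : ℕ) :
    {p : ℕ × ℕ | p.1 = 0 ∧ a ≤ p.2 ∧ p.2 ≤ b}.ncard = b + 1 - a := by
  have : {p : ℕ × ℕ | p.1 = 0 ∧ a ≤ p.2 ∧ p.2 ≤ b} = Prod.mk 0 '' Set.Icc a b := by
    ext ⟨m, l⟩
    simp [eq_comm, and_comm]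
  rw [this, Set.ncard_image_of_injective _ (Prod.mk_right_injective 0), Set.ncard_Icc_nat]

theorem stmt_8_general (r : ℝ) (s : ℝ)
    (hs : s = Real.sqrt (1 - r ^ 2)) (k : ℕ) (hk : 1 ≤ k)
    (hrange : r ∈ Set.Ico (1 / ((k : ℝ) + 2)) (1 / ((k : ℝ) + 1))) :
    {p : ℕ × ℕ | p ≠ (0, 0) ∧ cliffordEigenvalue r s p.1 p.2 < 0}
      = {p : ℕ × ℕ | p.1 = 0 ∧ 2 ≤ p.2 ∧ p.2 ≤ k + 1} ∧
    {p : ℕ × ℕ | p ≠ (0, 0) ∧ cliffordEigenvalue r s p.1 p.2 < 0}.ncard = k := by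
  have hr0 : 0 < r := lt_of_lt_of_le (by positivity) hrange.1
  have hr_half : r ≤ 1 / 2 :=
    hrange.2.le.trans (one_div_le_one_div_of_le (by norm_num) (by norm_cast; omega))
  have hs0 : 0 < s := hs ▸ Real.sqrt_pos.2 (by nlinarith)
  have hrs : r ^ 2 + s ^ 2 = 1 := by rw [hs, Real.sq_sqrt (by nlinarith)]; ring
  have hmodes : {p : ℕ × ℕ | p ≠ (0, 0) ∧ cliffordEigenvalue r s p.1 p.2 < 0}
      = {p : ℕ × ℕ | p.1 = 0 ∧ 2 ≤ p.2 ∧ p.2 ≤ k + 1} := by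
    ext ⟨m, l⟩
    simp only [Set.mem_ofPred_eq,
      CliffordTorus.eigenvalue_neg_iff_of_sq_add_sq_eq_one hr0 hr_half hs0 hrs,
      natCast_mul_lt_one_iff_of_mem_Ico hrange]
    exact and_iff_right_of_imp fun ⟨_, hl, _⟩ => by simp; omega
  refine ⟨hmodes, ?_⟩
  rw [hmodes, ncard_setOf_fst_eq_zero_snd_mem_Icc]
  omega

theorem stmt_8 (r : ℝ) (hr : r ∈ Set.Ioo (0 : ℝ) 1) (s : ℝ)
    (hs : s = Real.sqrt (1 - r ^ 2)) (k : ℕ) (hk : 1 ≤ k)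
    (hrange : r ∈ Set.Ico (1 / ((k : ℝ) + 2)) (1 / ((k : ℝ) + 1))) :
    {p : ℕ × ℕ | p ≠ (0, 0) ∧ cliffordEigenvalue r s p.1 p.2 < 0}
      = {p : ℕ × ℕ | p.1 = 0 ∧ 2 ≤ p.2 ∧ p.2 ≤ k + 1} ∧
    {p : ℕ × ℕ | p ≠ (0, 0) ∧ cliffordEigenvalue r s p.1 p.2 < 0}.ncard = k :=
  stmt_8_general r s hs k hk hrange
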